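/- For every natural number x, S_17(2^17 · x) = 34 · S_17(2^9 · x) − 17 · S_17(2 · x). -/

import Mathlib

/-!
Split `n < 2ᵏx` as `n = 2ᵏq + r` with `r < 2ᵏ`. The sign `(-1)^{σ(n)}` factors as the product of
the signs of `q` and `r`, so `S_m(2ᵏx) = ∑_{q<x} (-1)^{σ(q)} B_k(2ᵏq)`, where the block sum
`B_k(a) = ∑_{r<2ᵏ, m ∣ a + r} (-1)^{σ(r)}` depends only on `a mod m`. Since `2¹⁷ ≡ 2⁹ ≡ 2 (mod 17)`,
the theorem reduces to `B₁₇ = 34 B₉ - 17 B₁` on the 17 residues, which follows from the recurrence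
`B_{k+1}(a) = B_k(a) - B_k(a + 2ᵏ)` by a finite computation.
-/

/-- The Newman sum `S_m(x) = ∑_{0 ≤ n < x, m ∣ n} (-1)^{σ(n)}`, where `σ(n)` is the
number of 1's in the binary expansion of `n`. -/
def newmanSum (m x : ℕ) : ℤ :=
  ∑ n ∈ Finset.range x, if m ∣ n then (-1 : ℤ) ^ (Nat.digits 2 n).sum else 0

def thueMorseSign (n : ℕ) : ℤ := (-1) ^ (Nat.digits 2 n).sum

theorem thueMorseSign_one : thueMorseSign 1 = -1 := by
  simp [thueMorseSign]

theorem thueMorseSign_two_pow_mul_add {k r : ℕ} (hr : r < 2 ^ k) (q : ℕ) :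
    thueMorseSign (2 ^ k * q + r) = thueMorseSign q * thueMorseSign r := by
  rcases Nat.eq_zero_or_pos q with rfl | hq
  · simp [thueMorseSign]
  have hlen : (Nat.digits 2 r).length + (k - (Nat.digits 2 r).length) = k :=
    Nat.add_sub_cancel' ((Nat.digits_length_le_iff one_lt_two r).mpr hr)
  rw [thueMorseSign, add_comm, ← hlen, ← Nat.digits_append_zeroes_append_digits one_lt_two hq]
  simp [thueMorseSign, pow_add, mul_comm]

theorem newmanSum_eq_sum_thueMorseSign (m x : ℕ) :
    newmanSum m x = ∑ n ∈ Finset.range x, if m ∣ n then thueMorseSign n else 0 :=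
  rfl

def blockSum (m k a : ℕ) : ℤ :=
  ∑ r ∈ Finset.range (2 ^ k), if m ∣ a + r then thueMorseSign r else 0

theorem blockSum_congr {m a b : ℕ} (h : a ≡ b [MOD m]) (k : ℕ) :
    blockSum m k a = blockSum m k b := by
  refine Finset.sum_congr rfl fun r _ => ?_
  simp only [(h.add_right r).dvd_iff dvd_rfl]

theorem blockSum_succ (m k a : ℕ) :
    blockSum m (k + 1) a = blockSum m k a - blockSum m k (a + 2 ^ k) := by
  have hupper : ∀ r ∈ Finset.range (2 ^ k),
      (if m ∣ a + (2 ^ k + r) then thueMorseSign (2 ^ k + r) else 0)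
        = -(if m ∣ a + 2 ^ k + r then thueMorseSign r else 0) := by
    intro r hr
    have hsign := thueMorseSign_two_pow_mul_add (Finset.mem_range.mp hr) 1
    rw [mul_one, thueMorseSign_one, neg_one_mul] at hsign
    rw [← add_assoc, hsign]
    split_ifs <;> simp
  rw [blockSum, pow_succ, mul_two, Finset.sum_range_add, Finset.sum_congr rfl hupper,
    Finset.sum_neg_distrib, ← sub_eq_add_neg, blockSum, blockSum]

theorem newmanSum_two_pow_mul (m k x : ℕ) :
    newmanSum m (2 ^ k * x) =
      ∑ q ∈ Finset.range x, thueMorseSign q * blockSum m k (2 ^ k * q) := by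
  induction x with
  | zero => simp [newmanSum]
  | succ x ih =>
    rw [newmanSum_eq_sum_thueMorseSign] at ih ⊢
    rw [Nat.mul_succ, Finset.sum_range_add, ih, Finset.sum_range_succ, blockSum, Finset.mul_sum]
    congr 1
    refine Finset.sum_congr rfl fun r hr => ?_
    rw [thueMorseSign_two_pow_mul_add (Finset.mem_range.mp hr), mul_ite, mul_zero]

/-- Evaluating `blockSum` directly would expand `2ᵏ` numbers into digits; the recurrence
`blockSum_succ` fills this table with `k * m` subtractions, few enough for `decide`. -/
def blockSumTable (m : ℕ) : ℕ → List ℤ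
  | 0 => (List.range m).map fun a => if m ∣ a then 1 else 0
  | k + 1 => (List.range m).map fun a =>
      (blockSumTable m k).getD a 0 - (blockSumTable m k).getD ((a + 2 ^ k) % m) 0

theorem blockSum_eq_getD_blockSumTable {m a : ℕ} (ha : a < m) (k : ℕ) :
    blockSum m k a = (blockSumTable m k).getD a 0 := by
  induction k generalizing a with
  | zero => simp [blockSum, blockSumTable, ha, thueMorseSign]
  | succ k ih =>
    rw [blockSum_succ, blockSumTable, List.getD_eq_getElem _ _ (by simpa using ha),
      List.getElem_map, List.getElem_range, ← ih ha, ← ih (Nat.mod_lt _ (by omega)),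
      blockSum_congr (Nat.mod_modEq (a + 2 ^ k) m)]

theorem blockSum_seventeen (a : ℕ) :
    blockSum 17 17 a = 34 * blockSum 17 9 a - 17 * blockSum 17 1 a := by
  have ha : a % 17 < 17 := Nat.mod_lt a (by norm_num)
  simp only [← blockSum_congr (Nat.mod_modEq a 17), blockSum_eq_getD_blockSumTable ha]
  generalize a % 17 = b at ha ⊢
  revert b
  decide

/-- `S₁₇(2¹⁷ x) = 34 S₁₇(2⁹ x) - 17 S₁₇(2 x)` for all natural `x`. -/
theorem newmanSum_seventeen (x : ℕ) :
    newmanSum 17 (2 ^ 17 * x) = 34 * newmanSum 17 (2 ^ 9 * x) - 17 * newmanSum 17 (2 * x) := by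
  rw [show 2 * x = 2 ^ 1 * x by rw [pow_one], newmanSum_two_pow_mul, newmanSum_two_pow_mul,
    newmanSum_two_pow_mul, Finset.mul_sum, Finset.mul_sum, ← Finset.sum_sub_distrib]
  refine Finset.sum_congr rfl fun q _ => ?_
  have h17 : 2 ^ 17 * q ≡ 2 ^ 1 * q [MOD 17] := Nat.ModEq.mul_right q (by decide)
  have h9 : 2 ^ 9 * q ≡ 2 ^ 1 * q [MOD 17] := Nat.ModEq.mul_right q (by decide)
  rw [blockSum_congr h17, blockSum_congr h9, blockSum_seventeen]
  ring
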